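/- arXiv:cs/0504015 — 9 statements merged into one kernel-verified Lean document; each statement's English description precedes it below -/
import Mathlib

section
/- Let Γ be a 2×2 diagonal matrix with positive diagonal entries γ1 ≥ γ2 > 0, and set g = (γ1 γ2)^(1/2). Then the 2×2 real matrix S with first column (sqrt((g²-γ2²)/(γ1²-γ2²)), sqrt((γ1²-g²)/(γ1²-γ2²)))ᵀ (interpreted appropriately when γ1=γ2) is orthogonal, and Γ·S admits a QR decomposition Γ·S = Q·R with R upper triangular having both diagonal entries equal to g. -/
/-!
Take for `S` the rotation with `cos² θ = γ2 / (γ1 + γ2)`. The first column `(γ1 cos θ, γ2 sin θ)`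
of `Γ S` then has squared length `γ1 γ2 = g²`, so the rotation `Q` carrying `e₁` to that column
gives `R = Qᵀ Γ S` with `R 0 0 = g`; as `R` is upper triangular with `det R = det Γ = g²`,
also `R 1 1 = g`.
-/

open Matrix

section PlaneRotation

variable {K : Type*} [CommRing K]

def planeRotation (c s : K) : Matrix (Fin 2) (Fin 2) K := !![c, -s; s, c]

theorem det_planeRotation (c s : K) : (planeRotation c s).det = c ^ 2 + s ^ 2 := by
  rw [planeRotation, det_fin_two_of]
  ring

theorem planeRotation_transpose_mul_self {c s : K} (h : c ^ 2 + s ^ 2 = 1) :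
    (planeRotation c s)ᵀ * planeRotation c s = 1 := by
  ext i j
  fin_cases i <;> fin_cases j <;> simp [planeRotation, mul_apply] <;>
    first | ring1 | linear_combination h

end PlaneRotation

theorem exists_orthogonal_mul_upperTriangular_fin_two (A : Matrix (Fin 2) (Fin 2) ℝ) {r : ℝ}
    (hr : 0 < r) (hcol : A 0 0 ^ 2 + A 1 0 ^ 2 = r ^ 2) :
    ∃ Q R : Matrix (Fin 2) (Fin 2) ℝ, Qᵀ * Q = 1 ∧ R 1 0 = 0 ∧ R 0 0 = r ∧
      R 1 1 = A.det / r ∧ A = Q * R := by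
  set Q := planeRotation (A 0 0 / r) (A 1 0 / r)
  have hunit : (A 0 0 / r) ^ 2 + (A 1 0 / r) ^ 2 = 1 := by
    rw [div_pow, div_pow, ← add_div, hcol, div_self (by positivity)]
  have hQ : Qᵀ * Q = 1 := planeRotation_transpose_mul_self hunit
  have hR10 : (Qᵀ * A) 1 0 = 0 := by
    simp [Q, planeRotation, mul_apply]
    ring
  have hR00 : (Qᵀ * A) 0 0 = r := by
    simp [Q, planeRotation, mul_apply]
    field_simp
    linear_combination hcol
  have hdet : (Qᵀ * A).det = A.det := by
    rw [det_mul, det_transpose, det_planeRotation, hunit, one_mul]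
  refine ⟨Q, Qᵀ * A, hQ, hR10, hR00, ?_, ?_⟩
  · rw [← hdet, det_fin_two, hR10, hR00]
    field_simp
    ring
  · rw [← mul_assoc, mul_eq_one_comm.mp hQ, one_mul]

/-- Base case (M=2) of the equal-diagonal R-factor lemma: for
`Γ = diag(γ1, γ2)` with `γ1 ≥ γ2 > 0` and `g = √(γ1 γ2)`, there is an
orthogonal `S` whose first column is the stated one (when `γ1 ≠ γ2`), such that
`Γ S = Q R` with `Q` orthogonal and `R` upper triangular with both diagonal
entries equal to `g`. -/
theorem stmt1 (γ1 γ2 : ℝ) (h12 : γ2 ≤ γ1) (h2 : 0 < γ2) :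
    ∃ S Q R : Matrix (Fin 2) (Fin 2) ℝ,
      Sᵀ * S = 1 ∧
      (γ1 ≠ γ2 →
        S 0 0 = Real.sqrt ((γ1 * γ2 - γ2 ^ 2) / (γ1 ^ 2 - γ2 ^ 2)) ∧
        S 1 0 = Real.sqrt ((γ1 ^ 2 - γ1 * γ2) / (γ1 ^ 2 - γ2 ^ 2))) ∧
      Qᵀ * Q = 1 ∧
      R 1 0 = 0 ∧
      R 0 0 = Real.sqrt (γ1 * γ2) ∧ R 1 1 = Real.sqrt (γ1 * γ2) ∧
      Matrix.diagonal ![γ1, γ2] * S = Q * R := by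
  have hγ1 : 0 < γ1 := h2.trans_le h12
  set c := √(γ2 / (γ1 + γ2))
  set s := √(γ1 / (γ1 + γ2))
  have hc : c ^ 2 = γ2 / (γ1 + γ2) := Real.sq_sqrt (by positivity)
  have hs : s ^ 2 = γ1 / (γ1 + γ2) := Real.sq_sqrt (by positivity)
  have hg : √(γ1 * γ2) ^ 2 = γ1 * γ2 := Real.sq_sqrt (by positivity)
  have hcs : c ^ 2 + s ^ 2 = 1 := by rw [hc, hs]; field_simp; ring
  obtain ⟨Q, R, hQ, hR10, hR00, hR11, hA⟩ :=
    exists_orthogonal_mul_upperTriangular_fin_two (diagonal ![γ1, γ2] * planeRotation c s)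
      (Real.sqrt_pos.2 (by positivity) : 0 < √(γ1 * γ2)) (by
        simp [planeRotation, mul_pow, hc, hs, hg]
        field_simp)
  refine ⟨planeRotation c s, Q, R, planeRotation_transpose_mul_self hcs, fun hne => ?_,
    hQ, hR10, hR00, ?_, hA⟩
  · have hfactor : γ1 ^ 2 - γ2 ^ 2 = (γ1 - γ2) * (γ1 + γ2) := by ring
    have hdiff : γ1 - γ2 ≠ 0 := sub_ne_zero.2 hne
    have hc' : (γ1 * γ2 - γ2 ^ 2) / (γ1 ^ 2 - γ2 ^ 2) = γ2 / (γ1 + γ2) := by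
      rw [hfactor]; field_simp
    have hs' : (γ1 ^ 2 - γ1 * γ2) / (γ1 ^ 2 - γ2 ^ 2) = γ1 / (γ1 + γ2) := by
      rw [hfactor]; field_simp
    rw [hc', hs']
    exact ⟨rfl, rfl⟩
  · rw [hR11, det_mul, det_diagonal, det_planeRotation, hcs, Fin.prod_univ_two]
    simp [Real.div_sqrt]
end

section
/- Let Γ be a diagonal nonsingular M×M complex matrix with diagonal entries γ1,…,γM of positive modulus. Then there exists an M×M unitary matrix S such that Γ·S = Q·R with Q unitary and R upper triangular with all diagonal entries equal to (∏_{k=1}^M |γ_k|)^{1/M}. -/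
/-!
Put `c := (∏ k, ‖γ k‖) ^ (1 / M)`, so that `|det Γ| = c ^ M`; it suffices to find unitaries `S`, `Q`
such that `Qᴴ Γ S` is upper triangular with constant diagonal `c`, and this holds for every square
matrix `A` with `|det A| = c ^ M`. The eigenvalues of `Aᴴ A` are the `‖A u‖ ^ 2` over an orthonormal
eigenbasis `u` and multiply to `c ^ (2 M)`, so `‖A u‖ ≤ c ≤ ‖A v‖` for two such eigenvectors, and a
unit vector `s` in their span has `‖A s‖ = c`. Completing `s` and `A s / c` to unitaries `U`, `V`
makes the first column of `Vᴴ A U` equal to `c e₀`, so its lower right block has determinant of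
modulus `c ^ (M - 1)` and induction applies.
-/

open Matrix

theorem Finset.exists_le_and_le_of_prod_eq_pow {ι : Type*} [Fintype ι] [Nonempty ι]
    {f : ι → ℝ} {c : ℝ} (hf : ∀ i, 0 < f i) (hc : 0 < c) (h : ∏ i, f i = c ^ Fintype.card ι) :
    (∃ i, f i ≤ c) ∧ ∃ j, c ≤ f j := by
  constructor <;> by_contra! hlt
  · have := Finset.prod_lt_prod_of_nonempty (fun i _ ↦ hc) (fun i _ ↦ hlt i) univ_nonempty
    simp [h] at this
  · have := Finset.prod_lt_prod_of_nonempty (fun i _ ↦ hf i) (fun i _ ↦ hlt i) univ_nonempty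
    simp [h] at this

section InnerProduct

variable {𝕜 E F : Type*} [RCLike 𝕜] [NormedAddCommGroup E] [InnerProductSpace 𝕜 E]
  [NormedAddCommGroup F] [InnerProductSpace 𝕜 F]

theorem norm_sqrt_smul_add_sqrt_smul_sq {x y : E} (hxy : inner 𝕜 x y = 0) {a b : ℝ}
    (ha : 0 ≤ a) (hb : 0 ≤ b) :
    ‖(√a : 𝕜) • x + (√b : 𝕜) • y‖ ^ 2 = a * ‖x‖ ^ 2 + b * ‖y‖ ^ 2 := by
  rw [sq, norm_add_sq_eq_norm_sq_add_norm_sq_of_inner_eq_zero (𝕜 := 𝕜) _ _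
      (by simp [inner_smul_left, inner_smul_right, hxy]),
    ← sq, ← sq, norm_smul, norm_smul, mul_pow, mul_pow, RCLike.norm_ofReal, RCLike.norm_ofReal,
    sq_abs, sq_abs, Real.sq_sqrt ha, Real.sq_sqrt hb]

theorem LinearMap.exists_norm_eq_one_norm_apply_eq_of_inner_eq_zero (T : E →ₗ[𝕜] F) {u v : E}
    (hu : ‖u‖ = 1) (hv : ‖v‖ = 1) (huv : inner 𝕜 u v = 0) (hTuv : inner 𝕜 (T u) (T v) = 0)
    {c : ℝ} (hTu : ‖T u‖ ≤ c) (hTv : c ≤ ‖T v‖) :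
    ∃ s, ‖s‖ = 1 ∧ ‖T s‖ = c := by
  have hc : c ^ 2 ∈ segment ℝ (‖T u‖ ^ 2) (‖T v‖ ^ 2) := by
    rw [segment_eq_Icc (by gcongr; linarith)]
    exact ⟨by gcongr, by gcongr; linarith [norm_nonneg (T u)]⟩
  obtain ⟨a, b, ha, hb, hab, habc⟩ := hc
  refine ⟨(√a : 𝕜) • u + (√b : 𝕜) • v, ?_, ?_⟩
  · rw [← pow_eq_one_iff_of_nonneg (norm_nonneg _) two_ne_zero,
      norm_sqrt_smul_add_sqrt_smul_sq huv ha hb]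
    simp [hu, hv, hab]
  · rw [← sq_eq_sq₀ (norm_nonneg _) (hTu.trans' (norm_nonneg _)), map_add, map_smul, map_smul,
      norm_sqrt_smul_add_sqrt_smul_sq hTuv ha hb, ← habc, smul_eq_mul, smul_eq_mul]

theorem LinearMap.exists_norm_eq_one_norm_apply_eq_of_normDet_eq [FiniteDimensional 𝕜 E]
    [FiniteDimensional 𝕜 F] [Nontrivial E] (T : E →ₗ[𝕜] F) {c : ℝ} (hc : 0 < c)
    (hT : T.normDet = c ^ Module.finrank 𝕜 E) :
    ∃ s, ‖s‖ = 1 ∧ ‖T s‖ = c := by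
  set n := Module.finrank 𝕜 E
  have hS := T.isSymmetric_adjoint_comp_self
  set b := hS.eigenvectorBasis (rfl : n = n)
  set σ := fun i ↦ ‖T (b i)‖
  have hinner : ∀ i j, inner 𝕜 (T (b i)) (T (b j)) =
      if i = j then (hS.eigenvalues rfl j : 𝕜) else 0 := by
    intro i j
    rw [← adjoint_inner_right, ← LinearMap.comp_apply, hS.apply_eigenvectorBasis,
      inner_smul_right, b.inner_eq_ite]
    split_ifs <;> simp
  have hσ : ∀ i, (σ i : 𝕜) ^ 2 = hS.eigenvalues rfl i := by
    intro i
    rw [← inner_self_eq_norm_sq_to_K, hinner, if_pos rfl]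
  have hprod : ∏ i, σ i = c ^ n := by
    have h := T.normDet_sq
    rw [hS.det_eq_prod_eigenvalues rfl, hT] at h
    simp_rw [← hσ] at h
    norm_cast at h
    rw [Finset.prod_pow] at h
    exact (pow_left_inj₀ (Finset.prod_nonneg fun i _ ↦ norm_nonneg _) (by positivity)
      two_ne_zero).mp h.symm
  have hσpos : ∀ i, 0 < σ i := by
    have : ∏ i, σ i ≠ 0 := hprod ▸ by positivity
    exact fun i ↦ (norm_nonneg _).lt_of_ne' (Finset.prod_ne_zero_iff.mp this i
      (Finset.mem_univ i))
  have : Nonempty (Fin n) := ⟨⟨0, Module.finrank_pos⟩⟩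
  obtain ⟨⟨i, hi⟩, j, hj⟩ :=
    Finset.exists_le_and_le_of_prod_eq_pow hσpos hc (by simpa using hprod)
  by_cases hij : i = j
  · exact ⟨b i, b.orthonormal.1 i, le_antisymm hi (hij ▸ hj)⟩
  · refine T.exists_norm_eq_one_norm_apply_eq_of_inner_eq_zero (b.orthonormal.1 i)
      (b.orthonormal.1 j) (b.orthonormal.2 hij) ?_ hi hj
    simp [hinner, hij]

end InnerProduct

namespace Matrix

variable {α : Type*} {n : ℕ}

/-- `fromBlocks 1 0 0 M`, indexed by `Fin (n + 1)` instead of `Fin 1 ⊕ Fin n`. -/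
def fromBlocksOne [Zero α] [One α] (M : Matrix (Fin n) (Fin n) α) :
    Matrix (Fin (n + 1)) (Fin (n + 1)) α :=
  of (Fin.cons (Fin.cons 1 0) fun i ↦ Fin.cons 0 (M i))

section Apply

variable [Zero α] [One α] (M : Matrix (Fin n) (Fin n) α) (i j : Fin n)

@[simp] theorem fromBlocksOne_zero_zero : fromBlocksOne M 0 0 = 1 := rfl
@[simp] theorem fromBlocksOne_zero_succ : fromBlocksOne M 0 j.succ = 0 := rfl
@[simp] theorem fromBlocksOne_succ_zero : fromBlocksOne M i.succ 0 = 0 := rfl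
@[simp] theorem fromBlocksOne_succ_succ : fromBlocksOne M i.succ j.succ = M i j := rfl

end Apply

theorem fromBlocksOne_one [Zero α] [One α] :
    fromBlocksOne (1 : Matrix (Fin n) (Fin n) α) = 1 := by
  ext i j
  cases i using Fin.cases <;> cases j using Fin.cases <;>
    simp [one_apply, (Fin.succ_ne_zero _).symm]

theorem fromBlocksOne_mul [NonAssocSemiring α] (M N : Matrix (Fin n) (Fin n) α) :
    fromBlocksOne M * fromBlocksOne N = fromBlocksOne (M * N) := by
  ext i j
  cases i using Fin.cases <;> cases j using Fin.cases <;> simp [mul_apply, Fin.sum_univ_succ]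

theorem conjTranspose_fromBlocksOne [NonAssocSemiring α] [StarRing α]
    (M : Matrix (Fin n) (Fin n) α) : (fromBlocksOne M)ᴴ = fromBlocksOne Mᴴ := by
  ext i j
  cases i using Fin.cases <;> cases j using Fin.cases <;> simp

theorem fromBlocksOne_mem_unitaryGroup [CommRing α] [StarRing α]
    {M : Matrix (Fin n) (Fin n) α} (hM : M ∈ unitaryGroup (Fin n) α) :
    fromBlocksOne M ∈ unitaryGroup (Fin (n + 1)) α := by
  rw [mem_unitaryGroup_iff', star_eq_conjTranspose, conjTranspose_fromBlocksOne,
    fromBlocksOne_mul, ← star_eq_conjTranspose, mem_unitaryGroup_iff'.mp hM, fromBlocksOne_one]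

section Corner

variable [NonAssocSemiring α] (P S : Matrix (Fin n) (Fin n) α)
  (T : Matrix (Fin (n + 1)) (Fin (n + 1)) α)

theorem fromBlocksOne_mul_mul_fromBlocksOne_zero_zero :
    (fromBlocksOne P * T * fromBlocksOne S) 0 0 = T 0 0 := by
  simp [mul_apply, Fin.sum_univ_succ]

theorem fromBlocksOne_mul_mul_fromBlocksOne_succ_zero (hT : ∀ i : Fin n, T i.succ 0 = 0)
    (i : Fin n) :
    (fromBlocksOne P * T * fromBlocksOne S) i.succ 0 = 0 := by
  simp [mul_apply, Fin.sum_univ_succ, hT]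

theorem submatrix_fromBlocksOne_mul_mul_fromBlocksOne :
    (fromBlocksOne P * T * fromBlocksOne S).submatrix Fin.succ Fin.succ =
      P * T.submatrix Fin.succ Fin.succ * S := by
  ext i j
  simp [mul_apply, Fin.sum_univ_succ, Finset.sum_mul]

end Corner

theorem blockTriangular_id_of_succ [Zero α] {R : Matrix (Fin (n + 1)) (Fin (n + 1)) α}
    (h₀ : ∀ i : Fin n, R i.succ 0 = 0) (h : (R.submatrix Fin.succ Fin.succ).BlockTriangular id) :
    R.BlockTriangular id := by
  intro i j hji
  cases i using Fin.cases with
  | zero => exact absurd hji (Fin.not_lt_zero j)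
  | succ i =>
    cases j using Fin.cases with
    | zero => exact h₀ i
    | succ j => exact h (Fin.succ_lt_succ_iff.mp hji)

theorem det_eq_mul_det_submatrix_succ_succ [CommRing α]
    {T : Matrix (Fin (n + 1)) (Fin (n + 1)) α} (hT : ∀ i : Fin n, T i.succ 0 = 0) :
    T.det = T 0 0 * (T.submatrix Fin.succ Fin.succ).det := by
  simp [det_succ_column_zero T, Fin.sum_univ_succ, hT]

section Unitary

variable {𝕜 ι : Type*} [RCLike 𝕜] [Fintype ι] [DecidableEq ι]

theorem norm_det_of_mem_unitaryGroup {U : Matrix ι ι 𝕜} (hU : U ∈ unitaryGroup ι 𝕜) :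
    ‖U.det‖ = 1 :=
  CStarRing.norm_of_mem_unitary (det_of_mem_unitary hU)

theorem exists_mem_unitaryGroup_apply_eq (j : ι) {v : EuclideanSpace 𝕜 ι} (hv : ‖v‖ = 1) :
    ∃ U ∈ unitaryGroup ι 𝕜, ∀ i, U i j = v i := by
  have hsingle : Orthonormal 𝕜 (({j} : Set ι).domRestrict fun _ ↦ v) :=
    ⟨fun _ ↦ hv, fun a b hab ↦ absurd (Subsingleton.elim a b) hab⟩
  obtain ⟨b, hb⟩ := hsingle.exists_orthonormalBasis_extension_of_card_eq finrank_euclideanSpace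
  refine ⟨(EuclideanSpace.basisFun ι 𝕜).toBasis.toMatrix b,
    (EuclideanSpace.basisFun ι 𝕜).toMatrix_orthonormalBasis_mem_unitary b, fun i ↦ ?_⟩
  simp [Module.Basis.toMatrix_apply, hb j rfl]

end Unitary

variable {𝕜 : Type*} [RCLike 𝕜]

theorem exists_unitary_col_zero_eq (A : Matrix (Fin (n + 1)) (Fin (n + 1)) 𝕜) {c : ℝ}
    (hc : 0 < c) (hA : ‖A.det‖ = c ^ (n + 1)) :
    ∃ U ∈ unitaryGroup (Fin (n + 1)) 𝕜, ∃ V ∈ unitaryGroup (Fin (n + 1)) 𝕜,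
      (Vᴴ * A * U) 0 0 = c ∧ ∀ i : Fin n, (Vᴴ * A * U) i.succ 0 = 0 := by
  obtain ⟨s, hs, hAs⟩ := (toLpLin 2 2 A).exists_norm_eq_one_norm_apply_eq_of_normDet_eq hc (by
    rw [LinearMap.normDet_eq_norm_det, toLpLin_eq_toLin, LinearMap.det_toLin,
      finrank_euclideanSpace_fin, hA])
  obtain ⟨U, hU, hUs⟩ := exists_mem_unitaryGroup_apply_eq 0 hs
  obtain ⟨V, hV, hVs⟩ := exists_mem_unitaryGroup_apply_eq 0
    (v := ((c⁻¹ : ℝ) : 𝕜) • toLpLin 2 2 A s) (by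
      rw [norm_smul, hAs, RCLike.norm_ofReal, abs_inv, abs_of_pos hc, inv_mul_cancel₀ hc.ne'])
  have hAU : ∀ k, (A * U) k 0 = c * V k 0 := by
    intro k
    simp [mul_apply, hUs, hVs, mulVec, dotProduct, hc.ne']
  have hcol : ∀ i, (Vᴴ * A * U) i 0 = c * (Vᴴ * V) i 0 := by
    intro i
    rw [Matrix.mul_assoc, mul_apply, mul_apply, Finset.mul_sum]
    exact Finset.sum_congr rfl fun k _ ↦ by rw [hAU]; ring
  have hVV : Vᴴ * V = 1 := mem_unitaryGroup_iff'.mp hV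
  rw [hVV] at hcol
  refine ⟨U, hU, V, hV, ?_, fun i ↦ ?_⟩
  · simpa using hcol 0
  · simpa [Fin.succ_ne_zero] using hcol i.succ

theorem exists_unitary_blockTriangular_diag_eq (A : Matrix (Fin n) (Fin n) 𝕜) {c : ℝ}
    (hc : 0 < c) (hA : ‖A.det‖ = c ^ n) :
    ∃ S ∈ unitaryGroup (Fin n) 𝕜, ∃ Q ∈ unitaryGroup (Fin n) 𝕜,
      (Qᴴ * A * S).BlockTriangular id ∧ ∀ i, (Qᴴ * A * S) i i = c := by
  induction n with
  | zero => exact ⟨1, one_mem _, 1, one_mem _, fun i ↦ i.elim0, fun i ↦ i.elim0⟩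
  | succ n ih =>
    obtain ⟨U, hU, V, hV, h₀₀, hcol⟩ := exists_unitary_col_zero_eq A hc hA
    set T := Vᴴ * A * U
    have hT : ‖(T.submatrix Fin.succ Fin.succ).det‖ = c ^ n := by
      have hdet : ‖T.det‖ = c ^ (n + 1) := by
        simp [T, det_mul, norm_det_of_mem_unitaryGroup hU, norm_det_of_mem_unitaryGroup hV, hA]
      rw [det_eq_mul_det_submatrix_succ_succ hcol, h₀₀, norm_mul, RCLike.norm_ofReal,
        abs_of_pos hc, pow_succ'] at hdet
      exact mul_left_cancel₀ hc.ne' hdet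
    obtain ⟨S', hS', Q', hQ', htri, hdiag⟩ := ih _ hT
    have hR : (V * fromBlocksOne Q')ᴴ * A * (U * fromBlocksOne S') =
        fromBlocksOne Q'ᴴ * T * fromBlocksOne S' := by
      simp only [conjTranspose_mul, conjTranspose_fromBlocksOne, T, Matrix.mul_assoc]
    refine ⟨U * fromBlocksOne S', mul_mem hU (fromBlocksOne_mem_unitaryGroup hS'),
      V * fromBlocksOne Q', mul_mem hV (fromBlocksOne_mem_unitaryGroup hQ'), ?_, fun i ↦ ?_⟩
    · rw [hR]
      refine blockTriangular_id_of_succ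
        (fromBlocksOne_mul_mul_fromBlocksOne_succ_zero _ _ _ hcol) ?_
      rwa [submatrix_fromBlocksOne_mul_mul_fromBlocksOne]
    · rw [hR]
      cases i using Fin.cases with
      | zero => rw [fromBlocksOne_mul_mul_fromBlocksOne_zero_zero, h₀₀]
      | succ i =>
        rw [← hdiag i, ← submatrix_fromBlocksOne_mul_mul_fromBlocksOne, submatrix_apply]

end Matrix

/-- Equal-diagonal R-factor lemma: for a nonsingular diagonal `Γ` there exists a
unitary `S` such that `Γ S = Q R` with `Q` unitary and `R` upper triangular with all
diagonal entries equal to `(∏ k |γ_k|)^(1/M)`. -/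
theorem stmt2 (M : ℕ) (hM : 0 < M) (γ : Fin M → ℂ) (hγ : ∀ k, γ k ≠ 0) :
    ∃ S Q R : Matrix (Fin M) (Fin M) ℂ,
      Sᴴ * S = 1 ∧ Qᴴ * Q = 1 ∧
      (∀ i j : Fin M, j < i → R i j = 0) ∧
      (∀ i : Fin M, R i i = (((∏ k, ‖γ k‖) ^ ((1:ℝ)/M) : ℝ) : ℂ)) ∧
      Matrix.diagonal γ * S = Q * R := by
  have hprod : 0 < ∏ k, ‖γ k‖ := Finset.prod_pos fun k _ ↦ norm_pos_iff.mpr (hγ k)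
  have hdet : ‖(diagonal γ).det‖ = ((∏ k, ‖γ k‖) ^ ((1:ℝ)/M)) ^ M := by
    rw [det_diagonal, norm_prod, one_div, Real.rpow_inv_natCast_pow hprod.le hM.ne']
  obtain ⟨S, hS, Q, hQ, htri, hdiag⟩ :=
    exists_unitary_blockTriangular_diag_eq (diagonal γ) (Real.rpow_pos_of_pos hprod _) hdet
  refine ⟨S, Q, Qᴴ * diagonal γ * S, mem_unitaryGroup_iff'.mp hS, mem_unitaryGroup_iff'.mp hQ,
    fun i j hji ↦ htri hji, hdiag, ?_⟩
  have hQQ : Q * Qᴴ = 1 := mem_unitaryGroup_iff.mp hQ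
  rw [Matrix.mul_assoc, ← Matrix.mul_assoc Q, hQQ, Matrix.one_mul]
end

section
/- Let H be a P×K complex matrix and M ≤ min{P,K} an integer. There exist a K×M matrix F, an M×P matrix W, and an M×M strictly upper-triangular matrix B satisfying W·H·F = B + I if and only if rank(H) ≥ M. -/
/-!
`B + 1` is unitriangular, hence invertible, so `M = rank (W H F) ≤ rank H`. Conversely, lifting
`M` independent vectors of the column space of `H` gives `F` with `H F` of full column rank;
a left inverse `W` of `H F` then solves the equation with `B = 0`.
-/

open Matrix

namespace Matrix

variable {m n p R K : Type*} [Fintype m] [Fintype n] [Fintype p] [DecidableEq m]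

theorem isUnit_add_one_of_strictlyUpperTriangular [CommRing R] [LinearOrder m]
    {B : Matrix m m R} (hB : ∀ i j, j ≤ i → B i j = 0) : IsUnit (B + 1) := by
  have hupper : (B + 1).IsUpperTriangular := fun i j (hji : j < i) => by
    rw [add_apply, hB i j hji.le, zero_add, one_apply_ne hji.ne']
  rw [isUnit_iff_isUnit_det, det_of_isUpperTriangular hupper]
  simp [hB _ _ le_rfl]

theorem card_le_rank_of_isUnit_mul_mul [CommSemiring R] [StrongRankCondition R]
    {W : Matrix m p R} {H : Matrix p n R} {F : Matrix n m R} (hunit : IsUnit (W * H * F)) :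
    Fintype.card m ≤ H.rank :=
  calc Fintype.card m = (W * (H * F)).rank := by rw [← Matrix.mul_assoc, rank_of_isUnit _ hunit]
    _ ≤ (H * F).rank := rank_mul_le_right _ _
    _ ≤ H.rank := rank_mul_le_left _ _

theorem exists_mul_eq_one_of_linearIndependent_col [Field K] [DecidableEq p]
    {A : Matrix p m K} (hA : LinearIndependent K A.col) : ∃ W : Matrix m p K, W * A = 1 := by
  rw [← mulVec_injective_iff] at hA
  obtain ⟨w, hw⟩ := A.mulVecLin.exists_leftInverse_of_injective (LinearMap.ker_eq_bot.mpr hA)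
  refine ⟨LinearMap.toMatrix' w, toLin'.injective ?_⟩
  rw [toLin'_mul, toLin'_toMatrix', toLin'_one]
  exact hw

theorem exists_mul_mul_eq_one_of_card_le_rank [Field K] [DecidableEq p]
    {H : Matrix p n K} (hrank : Fintype.card m ≤ H.rank) :
    ∃ (F : Matrix n m K) (W : Matrix m p K), W * H * F = 1 := by
  obtain ⟨v, hv⟩ := exists_linearIndependent_of_le_finrank hrank
  choose u hu using fun i => (v i).2
  let e := Fintype.equivFin m
  let F : Matrix n m K := of fun k i => u (e i) k
  have hcol : (H * F).col = Subtype.val ∘ v ∘ e := by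
    funext i
    exact hu (e i)
  have hindep : LinearIndependent K (H * F).col := by
    rw [hcol]
    exact (hv.map' _ (Submodule.ker_subtype _)).comp e e.injective
  obtain ⟨W, hW⟩ := exists_mul_eq_one_of_linearIndependent_col hindep
  exact ⟨F, W, by rw [Matrix.mul_assoc, hW]⟩

end Matrix

theorem stmt4_general (P K M : ℕ)
    (H : Matrix (Fin P) (Fin K) ℂ) :
    (∃ (F : Matrix (Fin K) (Fin M) ℂ) (W : Matrix (Fin M) (Fin P) ℂ)
       (B : Matrix (Fin M) (Fin M) ℂ),
        (∀ i j : Fin M, j ≤ i → B i j = 0) ∧ W * H * F = B + 1) ↔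
    M ≤ H.rank := by
  constructor
  · rintro ⟨F, W, B, hB, hWHF⟩
    have hunit : IsUnit (W * H * F) := hWHF ▸ isUnit_add_one_of_strictlyUpperTriangular hB
    simpa using card_le_rank_of_isUnit_mul_mul hunit
  · intro hrank
    have hcard : Fintype.card (Fin M) ≤ H.rank := by simpa using hrank
    obtain ⟨F, W, hWHF⟩ := exists_mul_mul_eq_one_of_card_le_rank hcard
    exact ⟨F, W, 0, fun _ _ _ => rfl, by rw [hWHF, zero_add]⟩

/-- Existence of a zero-forcing block decision feedback detector:
`W H F = B + I` with `B` strictly upper triangular is solvable iff `rank H ≥ M`. -/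
theorem stmt4 (P K M : ℕ) (hMP : M ≤ P) (hMK : M ≤ K)
    (H : Matrix (Fin P) (Fin K) ℂ) :
    (∃ (F : Matrix (Fin K) (Fin M) ℂ) (W : Matrix (Fin M) (Fin P) ℂ)
       (B : Matrix (Fin M) (Fin M) ℂ),
        (∀ i j : Fin M, j ≤ i → B i j = 0) ∧ W * H * F = B + 1) ↔
    M ≤ H.rank :=
  stmt4_general P K M H
end

section
/- Let A be a K×K positive semidefinite Hermitian matrix with eigenvalues λ1 ≥ λ2 ≥ … ≥ λK ≥ 0, and let F be a K×M complex matrix (M ≤ K) with tr(FᴴF) ≤ p0. Then det(FᴴAF) ≤ (p0/M)^M · ∏_{i=1}^M λ_i. -/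
/-!
Rotating by the eigenbasis, `FᴴAF = Gᴴ Λ G` with `G = VᴴF` and `GᴴG = FᴴF`. By Cauchy–Binet,
`det (Gᴴ Λ G) = ∑_S (∏_{k ∈ S} λ_k) |det G_S|²` over the `M`-element row sets `S`, and each
`∏_{k ∈ S} λ_k` is at most the product of the `M` largest eigenvalues, so
`det (FᴴAF) ≤ (∏_{i ≤ M} λ_i) det (FᴴF)`. Finally AM–GM on the eigenvalues of `FᴴF` gives
`det (FᴴF) ≤ (tr (FᴴF) / M)^M ≤ (p0 / M)^M`.
-/

open Matrix Finset

theorem Finset.sum_injective_eq_sum_strictMono_sum_perm {m : ℕ} {α β : Type*} [LinearOrder α]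
    [Fintype α] [AddCommMonoid β] (t : (Fin m → α) → β) :
    ∑ f with Function.Injective f, t f =
      ∑ g with StrictMono g, ∑ σ : Equiv.Perm (Fin m), t (g ∘ σ) := by
  rw [← sum_product']
  symm
  refine sum_nbij' (fun p => p.1 ∘ p.2)
    (fun f : Fin m → α => (f ∘ Tuple.sort f, (Tuple.sort f)⁻¹)) ?_ ?_ ?_ ?_ (fun _ _ => rfl)
  · simp only [mem_product, mem_filter, mem_univ, true_and, and_true]
    exact fun p hp => hp.injective.comp p.2.injective
  · simp only [mem_product, mem_filter, mem_univ, true_and, and_true]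
    exact fun f hf => (Tuple.monotone_sort f).strictMono_of_injective (hf.comp (Equiv.injective _))
  · simp only [mem_product, mem_filter, mem_univ, true_and, and_true]
    rintro ⟨g, σ⟩ hg
    have hsorted : (g ∘ σ) ∘ Tuple.sort (g ∘ σ) = g := by
      rw [Tuple.comp_perm_comp_sort_eq_comp_sort, Tuple.sort_eq_refl_iff_monotone.mpr hg.monotone]
      rfl
    have hinv : σ * Tuple.sort (g ∘ σ) = 1 := by
      ext i
      exact congrArg Fin.val (hg.injective (congrFun hsorted i))
    exact Prod.ext hsorted (eq_inv_of_mul_eq_one_left hinv).symm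
  · intro f _
    funext i
    simp

theorem Fin.val_le_of_strictMono {m n : ℕ} {g : Fin m → Fin n} (hg : StrictMono g) (i : Fin m) :
    (i : ℕ) ≤ g i := by
  simpa using card_le_card_of_injOn g (fun j hj => by simpa using hg (by simpa using hj))
    hg.injective.injOn (s := Iio i) (t := Iio (g i))

theorem Real.prod_le_sum_div_card_pow {ι : Type*} [Fintype ι] (z : ι → ℝ) (hz : ∀ i, 0 ≤ z i) :
    ∏ i, z i ≤ ((∑ i, z i) / Fintype.card ι) ^ Fintype.card ι := by
  set n := Fintype.card ι
  rcases Nat.eq_zero_or_pos n with hn | hn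
  · have : IsEmpty ι := Fintype.card_eq_zero_iff.mp hn
    simp [hn]
  have hn' : (n : ℝ) ≠ 0 := by positivity
  have amgm := Real.geom_mean_le_arith_mean_weighted univ (fun _ => 1 / (n : ℝ)) z
    (fun _ _ => by positivity) (by simp [n, hn']) fun i _ => hz i
  calc ∏ i, z i = (∏ i, z i ^ (1 / (n : ℝ))) ^ n := by
        rw [← prod_pow]
        refine prod_congr rfl fun i _ => ?_
        rw [← Real.rpow_natCast, ← Real.rpow_mul (hz i), one_div_mul_cancel hn', Real.rpow_one]
    _ ≤ (∑ i, 1 / (n : ℝ) * z i) ^ n :=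
        pow_le_pow_left₀ (prod_nonneg fun i _ => Real.rpow_nonneg (hz i) _) amgm n
    _ = ((∑ i, z i) / n) ^ n := by rw [sum_div]; simp only [one_div_mul_eq_div]

namespace Matrix

open scoped ComplexOrder in
theorem PosSemidef.re_det_le_pow_of_re_trace_le {𝕜 n : Type*} [RCLike 𝕜] [Fintype n]
    [DecidableEq n] {P : Matrix n n 𝕜} (hP : P.PosSemidef) {p : ℝ} (hp : RCLike.re P.trace ≤ p) :
    RCLike.re P.det ≤ (p / Fintype.card n) ^ Fintype.card n := by
  have heig := hP.eigenvalues_nonneg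
  rw [hP.isHermitian.trace_eq_sum_eigenvalues, ← RCLike.ofReal_sum, RCLike.ofReal_re] at hp
  rw [hP.isHermitian.det_eq_prod_eigenvalues, ← RCLike.ofReal_prod, RCLike.ofReal_re]
  refine (Real.prod_le_sum_div_card_pow _ heig).trans ?_
  have : 0 ≤ ∑ i, hP.isHermitian.eigenvalues i := sum_nonneg fun i _ => heig i
  gcongr

variable {R ι : Type*} [CommRing R] {m : ℕ}

theorem det_submatrix_comp_perm (B : Matrix ι (Fin m) R) (g : Fin m → ι)
    (σ : Equiv.Perm (Fin m)) :
    (B.submatrix (g ∘ σ) id).det = Equiv.Perm.sign σ * (B.submatrix g id).det := by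
  have : B.submatrix (g ∘ σ) id = (B.submatrix g id).submatrix σ id := rfl
  rw [this, det_permute]

variable [Fintype ι]

theorem det_mul_eq_sum_fun [DecidableEq ι] (A : Matrix (Fin m) ι R) (B : Matrix ι (Fin m) R) :
    (A * B).det = ∑ f : Fin m → ι, (∏ i, A i (f i)) * (B.submatrix f id).det := by
  have hrows : A * B = fun i => ∑ k, A i k • B k := by
    ext i j
    simp [mul_apply]
  change detRowAlternating (A * B) = _
  rw [hrows, ← AlternatingMap.coe_multilinearMap, MultilinearMap.map_sum]
  refine sum_congr rfl fun f _ => ?_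
  rw [MultilinearMap.map_smul_univ, smul_eq_mul]
  rfl

/-- The Cauchy–Binet formula. -/
theorem det_mul_eq_sum_strictMono [LinearOrder ι] (A : Matrix (Fin m) ι R)
    (B : Matrix ι (Fin m) R) :
    (A * B).det =
      ∑ g : Fin m → ι with StrictMono g, (A.submatrix id g).det * (B.submatrix g id).det := by
  have hinj : ∀ f : Fin m → ι,
      (∏ i, A i (f i)) * (B.submatrix f id).det ≠ 0 → Function.Injective f := by
    intro f hf i j hij
    by_contra hne
    exact hf (by rw [det_zero_of_row_eq hne (funext fun _ => by simp [hij]), mul_zero])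
  rw [det_mul_eq_sum_fun, ← sum_filter_of_ne fun f _ => hinj f,
    sum_injective_eq_sum_strictMono_sum_perm]
  refine sum_congr rfl fun g _ => ?_
  simp_rw [det_submatrix_comp_perm, ← det_transpose (A.submatrix id g), det_apply', sum_mul]
  refine sum_congr rfl fun σ _ => ?_
  simp only [Function.comp_apply, transpose_apply, submatrix_apply, id]
  ring

variable {𝕜 : Type*} [RCLike 𝕜] [LinearOrder ι]

theorem det_conjTranspose_mul_diagonal_mul (G : Matrix ι (Fin m) 𝕜) (w : ι → ℝ) :
    (Gᴴ * diagonal (fun k => (w k : 𝕜)) * G).det =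
      ((∑ g : Fin m → ι with StrictMono g,
        (∏ i, w (g i)) * ‖(G.submatrix g id).det‖ ^ 2 : ℝ) : 𝕜) := by
  rw [det_mul_eq_sum_strictMono]
  push_cast
  refine sum_congr rfl fun g _ => ?_
  have : (Gᴴ * diagonal (fun k => (w k : 𝕜))).submatrix id g =
      (G.submatrix g id)ᴴ * diagonal (fun i => (w (g i) : 𝕜)) := by
    ext i j
    simp [mul_apply, diagonal_apply]
  rw [this, det_mul, det_diagonal, det_conjTranspose, ← RCLike.conj_mul, starRingEnd_apply]
  ring

theorem re_det_conjTranspose_mul_diagonal_mul_le (G : Matrix ι (Fin m) 𝕜) (w : ι → ℝ) {c : ℝ}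
    (hc : ∀ g : Fin m → ι, StrictMono g → ∏ i, w (g i) ≤ c) :
    RCLike.re (Gᴴ * diagonal (fun k => (w k : 𝕜)) * G).det ≤ c * RCLike.re (Gᴴ * G).det := by
  have hGG := det_conjTranspose_mul_diagonal_mul G (fun _ => 1)
  simp only [RCLike.ofReal_one, diagonal_one, Matrix.mul_one, prod_const_one, one_mul] at hGG
  rw [det_conjTranspose_mul_diagonal_mul, hGG, RCLike.ofReal_re, RCLike.ofReal_re, mul_sum]
  gcongr with g hg
  exact hc g (mem_filter.mp hg).2

end Matrix

theorem stmt7_general (K M : ℕ) (hMK : M ≤ K) (p0 : ℝ)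
    (V : Matrix (Fin K) (Fin K) ℂ) (hV : Vᴴ * V = 1)
    (lam : Fin K → ℝ) (hmono : ∀ i j : Fin K, i ≤ j → lam j ≤ lam i)
    (hnn : ∀ i, 0 ≤ lam i)
    (A : Matrix (Fin K) (Fin K) ℂ)
    (hA : A = V * Matrix.diagonal (fun i => (lam i : ℂ)) * Vᴴ)
    (F : Matrix (Fin K) (Fin M) ℂ)
    (hpow : (Fᴴ * F).trace.re ≤ p0) :
    (Fᴴ * A * F).det.re ≤ (p0 / M) ^ M * ∏ i : Fin M, lam (Fin.castLE hMK i) := by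
  set G := Vᴴ * F
  have hAF : Fᴴ * A * F = Gᴴ * diagonal (fun i => (lam i : ℂ)) * G := by
    simp only [hA, G, conjTranspose_mul, conjTranspose_conjTranspose, Matrix.mul_assoc]
  have hGG : Gᴴ * G = Fᴴ * F := by
    simp only [G, conjTranspose_mul, conjTranspose_conjTranspose, Matrix.mul_assoc,
      ← Matrix.mul_assoc V, mul_eq_one_comm.mp hV, Matrix.one_mul]
  have hlead : ∀ g : Fin M → Fin K, StrictMono g →
      ∏ i, lam (g i) ≤ ∏ i : Fin M, lam (Fin.castLE hMK i) := fun g hg =>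
    prod_le_prod (fun i _ => hnn _) fun i _ => hmono _ _ (Fin.val_le_of_strictMono hg i)
  have hFF : (Fᴴ * F).det.re ≤ (p0 / M) ^ M := by
    open scoped ComplexOrder in
    simpa using (posSemidef_conjTranspose_mul_self F).re_det_le_pow_of_re_trace_le hpow
  calc (Fᴴ * A * F).det.re ≤ (∏ i : Fin M, lam (Fin.castLE hMK i)) * (Fᴴ * F).det.re := by
        rw [hAF, ← hGG]
        exact re_det_conjTranspose_mul_diagonal_mul_le G lam hlead
    _ ≤ (∏ i : Fin M, lam (Fin.castLE hMK i)) * (p0 / M) ^ M := by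
        gcongr
        exact prod_nonneg fun i _ => hnn _
    _ = (p0 / M) ^ M * ∏ i : Fin M, lam (Fin.castLE hMK i) := mul_comm _ _

/-- Power-constrained bound on the geometric SNR:
`det(FᴴAF) ≤ (p0/M)^M ∏_{i=1}^M λ_i` for any `F` with `tr(FᴴF) ≤ p0`. -/
theorem stmt7 (K M : ℕ) (hM : 0 < M) (hMK : M ≤ K) (p0 : ℝ) (hp0 : 0 < p0)
    (V : Matrix (Fin K) (Fin K) ℂ) (hV : Vᴴ * V = 1)
    (lam : Fin K → ℝ) (hmono : ∀ i j : Fin K, i ≤ j → lam j ≤ lam i)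
    (hnn : ∀ i, 0 ≤ lam i)
    (A : Matrix (Fin K) (Fin K) ℂ)
    (hA : A = V * Matrix.diagonal (fun i => (lam i : ℂ)) * Vᴴ)
    (F : Matrix (Fin K) (Fin M) ℂ)
    (hpow : (Fᴴ * F).trace.re ≤ p0) :
    (Fᴴ * A * F).det.re ≤ (p0 / M) ^ M * ∏ i : Fin M, lam (Fin.castLE hMK i) :=
  stmt7_general K M hMK p0 V hV lam hmono hnn A hA F hpow
end

section
/- Let A be a K×K positive semidefinite Hermitian matrix with eigen-decomposition A = VΛVᴴ, eigenvalues in nonincreasing order, and suppose λ_M > 0. Let Ṽ_M denote the first M columns of V. Then F = sqrt(p0/M) · Ṽ_M · Ψ, for any M×M unitary Ψ, satisfies tr(FᴴF) = p0 and det(FᴴAF) = (p0/M)^M ∏_{i=1}^M λ_i, i.e., it achieves the upper bound (p0/M)^M ∏_{i=1}^M λ_i over all F with tr(FᴴF) ≤ p0. -/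
/-!
Because `Vᴴ V = 1`, compressing by the first `M` columns `Ṽ_M` of `V` gives
`Ṽ_Mᴴ Ṽ_M = 1` and `Ṽ_Mᴴ A Ṽ_M = diag(λ_1, …, λ_M)`. Hence
`Fᴴ B F = (p0/M) Ψᴴ (Ṽ_Mᴴ B Ṽ_M) Ψ` for every `B`, and the unitary `Ψ` drops out of
both the trace of `Fᴴ F` and the determinant of `Fᴴ A F`.
-/

open Matrix

section Compression

variable {l m n α : Type*} [Fintype m] [Semiring α] [StarRing α]

theorem conjTranspose_submatrix_mul_mul_submatrix
    (V : Matrix m n α) (B : Matrix m m α) (e : l → n) :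
    (V.submatrix id e)ᴴ * B * V.submatrix id e = (Vᴴ * B * V).submatrix e e := by
  rw [submatrix_mul _ _ e id e Function.bijective_id, conjTranspose_submatrix,
    submatrix_mul _ _ e id id Function.bijective_id]
  rfl

variable [DecidableEq l]

theorem conjTranspose_submatrix_mul_submatrix_of_conjTranspose_mul_self [DecidableEq m]
    [DecidableEq n] {V : Matrix m n α} (hV : Vᴴ * V = 1) {e : l → n}
    (he : Function.Injective e) :
    (V.submatrix id e)ᴴ * V.submatrix id e = 1 := by
  simpa [hV, submatrix_one e he] using conjTranspose_submatrix_mul_mul_submatrix V 1 e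

theorem conjTranspose_submatrix_mul_conj_diagonal_mul_submatrix [Fintype n] [DecidableEq n]
    {V : Matrix m n α} (hV : Vᴴ * V = 1) (d : n → α) {e : l → n}
    (he : Function.Injective e) :
    (V.submatrix id e)ᴴ * (V * diagonal d * Vᴴ) * V.submatrix id e = diagonal (d ∘ e) := by
  have hcancel : Vᴴ * (V * diagonal d * Vᴴ) * V = diagonal d := by
    simp only [Matrix.mul_assoc, ← Matrix.mul_assoc Vᴴ V, hV, Matrix.one_mul, Matrix.mul_one]
  rw [conjTranspose_submatrix_mul_mul_submatrix, hcancel, submatrix_diagonal _ _ he]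

end Compression

theorem det_conjTranspose_mul_mul_of_conjTranspose_mul_self {n α : Type*} [Fintype n]
    [DecidableEq n] [CommRing α] [StarRing α] {Ψ : Matrix n n α} (hΨ : Ψᴴ * Ψ = 1)
    (B : Matrix n n α) : (Ψᴴ * B * Ψ).det = B.det := by
  rw [det_mul, det_mul, mul_right_comm, ← det_mul, hΨ, det_one, one_mul]

theorem conjTranspose_smul_mul_mul_smul {m n 𝕜 : Type*} [Fintype m] [RCLike 𝕜] (s : ℝ)
    (X : Matrix m n 𝕜) (B : Matrix m m 𝕜) :
    (s • X)ᴴ * B * (s • X) = s ^ 2 • (Xᴴ * B * X) := by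
  rw [conjTranspose_smul, star_trivial, Matrix.smul_mul, Matrix.smul_mul, Matrix.mul_smul,
    smul_smul, sq]

theorem stmt8_general (K M : ℕ) (hM : 0 < M) (hMK : M ≤ K) (p0 : ℝ) (hp0 : 0 < p0)
    (V : Matrix (Fin K) (Fin K) ℂ) (hV : Vᴴ * V = 1)
    (lam : Fin K → ℝ)
    (A : Matrix (Fin K) (Fin K) ℂ)
    (hA : A = V * Matrix.diagonal (fun i => (lam i : ℂ)) * Vᴴ)
    (Ψ : Matrix (Fin M) (Fin M) ℂ) (hΨ : Ψᴴ * Ψ = 1)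
    (F : Matrix (Fin K) (Fin M) ℂ)
    (hF : F = Real.sqrt (p0 / M) • (V.submatrix id (Fin.castLE hMK) * Ψ)) :
    (Fᴴ * F).trace = (p0 : ℂ) ∧
    (Fᴴ * A * F).det =
      ((((p0 / M) ^ M * ∏ i : Fin M, lam (Fin.castLE hMK i) : ℝ)) : ℂ) := by
  set W := V.submatrix id (Fin.castLE hMK)
  have hinj : Function.Injective (Fin.castLE hMK) := Fin.castLE_injective hMK
  have hcompress : ∀ B : Matrix (Fin K) (Fin K) ℂ,
      Fᴴ * B * F = (p0 / M) • (Ψᴴ * (Wᴴ * B * W) * Ψ) := by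
    intro B
    rw [hF, conjTranspose_smul_mul_mul_smul, Real.sq_sqrt (by positivity), conjTranspose_mul]
    simp only [Matrix.mul_assoc]
  constructor
  · rw [← Matrix.mul_one Fᴴ, hcompress, Matrix.mul_one,
      conjTranspose_submatrix_mul_submatrix_of_conjTranspose_mul_self hV hinj, Matrix.mul_one, hΨ,
      trace_smul, trace_one, Fintype.card_fin]
    have hM' : (M : ℂ) ≠ 0 := by exact_mod_cast hM.ne'
    rw [Complex.real_smul]
    push_cast
    field_simp
  · rw [hcompress, hA, conjTranspose_submatrix_mul_conj_diagonal_mul_submatrix hV _ hinj,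
      det_smul_of_tower, det_conjTranspose_mul_mul_of_conjTranspose_mul_self hΨ, det_diagonal,
      Fintype.card_fin, Complex.real_smul]
    push_cast
    rfl

/-- The precoder `F = √(p0/M) Ṽ_M Ψ` achieves the bound
`det(FᴴAF) = (p0/M)^M ∏_{i=1}^M λ_i` with full power `tr(FᴴF) = p0`. -/
theorem stmt8 (K M : ℕ) (hM : 0 < M) (hMK : M ≤ K) (p0 : ℝ) (hp0 : 0 < p0)
    (V : Matrix (Fin K) (Fin K) ℂ) (hV : Vᴴ * V = 1)
    (lam : Fin K → ℝ) (hmono : ∀ i j : Fin K, i ≤ j → lam j ≤ lam i)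
    (hnn : ∀ i, 0 ≤ lam i)
    (hpos : 0 < lam (Fin.castLE hMK ⟨M - 1, Nat.sub_lt hM Nat.one_pos⟩))
    (A : Matrix (Fin K) (Fin K) ℂ)
    (hA : A = V * Matrix.diagonal (fun i => (lam i : ℂ)) * Vᴴ)
    (Ψ : Matrix (Fin M) (Fin M) ℂ) (hΨ : Ψᴴ * Ψ = 1)
    (F : Matrix (Fin K) (Fin M) ℂ)
    (hF : F = Real.sqrt (p0 / M) • (V.submatrix id (Fin.castLE hMK) * Ψ)) :
    (Fᴴ * F).trace = (p0 : ℂ) ∧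
    (Fᴴ * A * F).det =
      ((((p0 / M) ^ M * ∏ i : Fin M, lam (Fin.castLE hMK i) : ℝ)) : ℂ) :=
  stmt8_general K M hM hMK p0 hp0 V hV lam A hA Ψ hΨ F hF
end

section
/- Let W = RHS of the MMSE orthogonality condition, i.e., W = (B+I) R_sy R_yy^{-1} with R_yy = (HF)(HF)ᴴ + R_vv and R_sy = (HF)ᴴ, where R_vv is positive definite. Then the error covariance R_ee = (WHF − B − I)(WHF − B − I)ᴴ + W R_vv Wᴴ equals (B+I)(I + Fᴴ Hᴴ R_vv^{-1} H F)^{-1}(B+I)ᴴ. -/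
open Matrix ComplexOrder

/-- MMSE error covariance: with `W = (B+I) R_sy R_yy⁻¹`, the error covariance
`(WHF − B − I)(WHF − B − I)ᴴ + W R_vv Wᴴ` equals
`(B+I)(I + Fᴴ Hᴴ R_vv⁻¹ H F)⁻¹(B+I)ᴴ`. -/
theorem stmt10 (P K M : ℕ)
    (H : Matrix (Fin P) (Fin K) ℂ) (F : Matrix (Fin K) (Fin M) ℂ)
    (B : Matrix (Fin M) (Fin M) ℂ)
    (Rvv : Matrix (Fin P) (Fin P) ℂ) (hRvv : Rvv.PosDef)
    (W : Matrix (Fin M) (Fin P) ℂ)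
    (hW : W = (B + 1) * (H * F)ᴴ * ((H * F) * (H * F)ᴴ + Rvv)⁻¹) :
    (W * H * F - B - 1) * (W * H * F - B - 1)ᴴ + W * Rvv * Wᴴ =
      (B + 1) * (1 + Fᴴ * Hᴴ * Rvv⁻¹ * H * F)⁻¹ * (B + 1)ᴴ := by
  set G : Matrix (Fin P) (Fin M) ℂ := H * F with hG
  set S : Matrix (Fin M) (Fin M) ℂ := 1 + Gᴴ * Rvv⁻¹ * G with hSdef
  have hRvvInvPD : Rvv⁻¹.PosDef := hRvv.inv
  have hPS : (Gᴴ * Rvv⁻¹ * G).PosSemidef := Matrix.PosSemidef.conjTranspose_mul_mul_same (Matrix.PosDef.posSemidef hRvvInvPD) G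
  have hS : S.PosDef := Matrix.PosDef.add_posSemidef (Matrix.PosDef.one) hPS
  have hRyy : (G * Gᴴ + Rvv).PosDef :=
    Matrix.PosDef.posSemidef_add (Matrix.posSemidef_self_mul_conjTranspose G) hRvv
  have hRvvDet : IsUnit Rvv.det := (Matrix.isUnit_iff_isUnit_det _).1 hRvv.isUnit
  have hRyyDet : IsUnit (G * Gᴴ + Rvv).det := (Matrix.isUnit_iff_isUnit_det _).1 hRyy.isUnit
  have hSdet : IsUnit S.det := (Matrix.isUnit_iff_isUnit_det _).1 hS.isUnit
  have hRvvInv : Rvv⁻¹ * Rvv = 1 := Matrix.nonsing_inv_mul _ hRvvDet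
  have hRyyInv : (G * Gᴴ + Rvv) * (G * Gᴴ + Rvv)⁻¹ = 1 := Matrix.mul_nonsing_inv _ hRyyDet
  have hSInv : S⁻¹ * S = 1 := Matrix.nonsing_inv_mul _ hSdet
  have hSInv' : S * S⁻¹ = 1 := Matrix.mul_nonsing_inv _ hSdet
  -- push-through identity
  have h1 : Gᴴ * Rvv⁻¹ * (G * Gᴴ + Rvv) = S * Gᴴ := by
    rw [hSdef]
    simp only [Matrix.mul_add, Matrix.add_mul, Matrix.one_mul, Matrix.mul_assoc, hRvvInv,
      Matrix.mul_one]
    rw [add_comm]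
  have h2 : Gᴴ * Rvv⁻¹ = S * (Gᴴ * ((G * Gᴴ + Rvv))⁻¹) := by
    have := congrArg (· * (G * Gᴴ + Rvv)⁻¹) h1
    simpa only [Matrix.mul_assoc, hRyyInv, Matrix.mul_one] using this
  have key : Gᴴ * (G * Gᴴ + Rvv)⁻¹ = S⁻¹ * (Gᴴ * Rvv⁻¹) := by
    rw [h2, ← Matrix.mul_assoc, hSInv, Matrix.one_mul]
  have hW' : W = (B + 1) * (S⁻¹ * (Gᴴ * Rvv⁻¹)) := by
    rw [hW, Matrix.mul_assoc, key]
  -- Hermitian facts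
  have hRvvH : Rvv⁻¹ᴴ = Rvv⁻¹ := by
    rw [Matrix.conjTranspose_nonsing_inv, hRvv.isHermitian.eq]
  have hSH : S⁻¹ᴴ = S⁻¹ := by
    rw [Matrix.conjTranspose_nonsing_inv, hS.isHermitian.eq]
  have hGS : Gᴴ * (Rvv⁻¹ * G) = S - 1 := by
    rw [hSdef, ← Matrix.mul_assoc, add_sub_cancel_left]
  -- error term
  have hWG : W * H * F - B - 1 = -((B + 1) * S⁻¹) := by
    rw [Matrix.mul_assoc W H F, ← hG, hW']
    have e : (B + 1) * (S⁻¹ * (Gᴴ * Rvv⁻¹)) * G = (B + 1) - (B + 1) * S⁻¹ := by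
      simp only [Matrix.mul_assoc]
      rw [show Gᴴ * (Rvv⁻¹ * G) = S - 1 from hGS, Matrix.mul_sub, hSInv, Matrix.mul_one,
        Matrix.mul_sub, Matrix.mul_one]
    rw [e]; abel
  -- final form of S
  have hSfin : 1 + Fᴴ * Hᴴ * Rvv⁻¹ * H * F = S := by
    rw [hSdef, hG, conjTranspose_mul]
    simp only [Matrix.mul_assoc]
  rw [hWG, hW', hSfin]
  have hWH : ((B + 1) * (S⁻¹ * (Gᴴ * Rvv⁻¹)))ᴴ = Rvv⁻¹ * (G * (S⁻¹ * (B + 1)ᴴ)) := by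
    simp only [conjTranspose_mul, hRvvH, hSH, conjTranspose_conjTranspose, Matrix.mul_assoc]
  rw [hWH]
  have hT1 : -((B + 1) * S⁻¹) * (-((B + 1) * S⁻¹))ᴴ
      = (B + 1) * S⁻¹ * (S⁻¹ * (B + 1)ᴴ) := by
    simp only [conjTranspose_neg, neg_mul, mul_neg, neg_neg, conjTranspose_mul, hSH,
      Matrix.mul_assoc]
  have hT2 : (B + 1) * (S⁻¹ * (Gᴴ * Rvv⁻¹)) * Rvv * (Rvv⁻¹ * (G * (S⁻¹ * (B + 1)ᴴ)))
      = (B + 1) * S⁻¹ * ((S - 1) * (S⁻¹ * (B + 1)ᴴ)) := by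
    have hmid : Rvv⁻¹ * (Rvv * (Rvv⁻¹ * (G * (S⁻¹ * (B + 1)ᴴ))))
        = Rvv⁻¹ * (G * (S⁻¹ * (B + 1)ᴴ)) := by
      rw [← Matrix.mul_assoc Rvv⁻¹ Rvv, hRvvInv, Matrix.one_mul]
    have hGSX : Gᴴ * (Rvv⁻¹ * (G * (S⁻¹ * (B + 1)ᴴ))) = (S - 1) * (S⁻¹ * (B + 1)ᴴ) := by
      rw [← Matrix.mul_assoc Rvv⁻¹ G, ← Matrix.mul_assoc Gᴴ, hGS]
    simp only [Matrix.mul_assoc, hmid, hGSX]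
  rw [hT1, hT2, Matrix.mul_assoc ((B+1)) S⁻¹, Matrix.mul_assoc ((B+1)) S⁻¹, ← Matrix.mul_add,
    ← Matrix.mul_add S⁻¹]
  have hfin : S⁻¹ * (B + 1)ᴴ + (S - 1) * (S⁻¹ * (B + 1)ᴴ) = S * (S⁻¹ * (B + 1)ᴴ) := by
    rw [Matrix.sub_mul, Matrix.one_mul]; abel
  rw [hfin, ← Matrix.mul_assoc S, hSInv', Matrix.one_mul, ← Matrix.mul_assoc]
end

section
/- With F = Ṽ_q [Φ 0] Ψ as in the waterfilling construction, the MMSE error covariance satisfies R_ee = U Ψᴴ (I_M + Φ̆ᵀ Λ̃_q Φ̆)^{-1} Ψ Uᴴ, where Φ̆ = [Φ 0_{q×(M−q)}], Λ̃_q = diag(λ1,…,λq), and U = B + I; and the arithmetic MSE tr(R_ee)/M is bounded below by q^{q/M} (p0 + Σ_{j=1}^q λ_j^{-1})^{−q/M} ∏_{j=1}^q λ_j^{−1/M}. -/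
open Matrix Finset ComplexOrder

/-!
Since `V` has orthonormal columns, `Fᴴ A F = Ψᴴ Φ̆ᵀ Λ̃_q Φ̆ Ψ`, and as `Ψ` is unitary the inverse
of `I + Fᴴ A F` is `Ψᴴ (I + Φ̆ᵀ Λ̃_q Φ̆)⁻¹ Ψ`; this is the formula for `R_ee`.

For the bound, `R_ee` is positive semidefinite, so AM–GM on its eigenvalues gives
`tr R_ee / M ≥ (det R_ee)^(1/M)`. Because `U` is unit upper triangular and `Ψ` is unitary,
`det R_ee = det (I + Φ̆ᵀ Λ̃_q Φ̆)⁻¹`, and the Weinstein–Aronszajn identity `det (I + XY) = det (I + YX)`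
reduces this determinant to `∏_{i ≤ q} (1 + λ_i φ_i²)`. The waterfilling levels make every factor
equal to `λ_i (p0 + Σ_j λ_j⁻¹) / q`.
-/

namespace Matrix

theorem det_add_one_of_forall_le_eq_zero {n R : Type*} [Fintype n] [LinearOrder n] [CommRing R]
    {B : Matrix n n R} (hB : ∀ i j, j ≤ i → B i j = 0) : (B + 1).det = 1 := by
  rw [det_of_isUpperTriangular fun i j hji => by simp [hB i j hji.le, (ne_of_gt hji : i ≠ j)]]
  exact prod_eq_one fun i _ => by simp [hB i i le_rfl]

section Square

variable {n : Type*} [Fintype n] [DecidableEq n]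

theorem inv_one_add_mul_mul_of_mul_eq_one {R : Type*} [CommRing R] {L U : Matrix n n R}
    (hLU : L * U = 1) (X : Matrix n n R) : (1 + L * X * U)⁻¹ = L * (1 + X)⁻¹ * U := by
  have h : 1 + L * X * U = L * (1 + X) * U := by
    rw [Matrix.mul_add, Matrix.add_mul, Matrix.mul_one, hLU]
  rw [h, mul_inv_rev, mul_inv_rev, inv_eq_left_inv hLU, inv_eq_right_inv hLU, Matrix.mul_assoc]

theorem PosSemidef.det_rpow_le_trace_div {𝕜 : Type*} [RCLike 𝕜] [Nonempty n] {A : Matrix n n 𝕜}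
    (hA : A.PosSemidef) :
    RCLike.re A.det ^ ((1 : ℝ) / Fintype.card n) ≤ RCLike.re A.trace / Fintype.card n := by
  have amgm := Real.geom_mean_le_arith_mean univ (fun _ => 1) hA.isHermitian.eigenvalues
    (fun _ _ => zero_le_one) (by simpa using Fintype.card_pos) fun i _ => hA.eigenvalues_nonneg i
  simp only [Real.rpow_one, sum_const, card_univ, nsmul_eq_mul, mul_one, one_mul] at amgm
  rw [hA.isHermitian.det_eq_prod_eigenvalues, hA.isHermitian.trace_eq_sum_eigenvalues,
    ← RCLike.ofReal_prod, ← RCLike.ofReal_sum, RCLike.ofReal_re, RCLike.ofReal_re, one_div]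
  exact amgm

theorem PosSemidef.inv_rpow_le_trace_conj_inv_div {𝕜 : Type*} [RCLike 𝕜] [Nonempty n]
    {U Ψ D : Matrix n n 𝕜} (hU : U.det = 1) (hΨ : Ψᴴ * Ψ = 1) (hD : D.PosSemidef) {x : ℝ}
    (hx : D.det = x) :
    x⁻¹ ^ ((1 : ℝ) / Fintype.card n) ≤
      RCLike.re (U * Ψᴴ * D⁻¹ * Ψ * Uᴴ).trace / Fintype.card n := by
  have hpsd : (U * Ψᴴ * D⁻¹ * Ψ * Uᴴ).PosSemidef := by
    have h := hD.inv.mul_mul_conjTranspose_same (U * Ψᴴ)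
    rwa [conjTranspose_mul, conjTranspose_conjTranspose, ← Matrix.mul_assoc] at h
  have hdet : (U * Ψᴴ * D⁻¹ * Ψ * Uᴴ).det = (x⁻¹ : ℝ) := by
    have hΨdet : star Ψ.det * Ψ.det = 1 := by rw [← det_conjTranspose, ← det_mul, hΨ, det_one]
    rw [det_mul, det_mul, det_mul, det_mul, det_conjTranspose, det_conjTranspose, hU, star_one,
      det_nonsing_inv, Ring.inverse_eq_inv', hx, RCLike.ofReal_inv]
    linear_combination (x : 𝕜)⁻¹ * hΨdet
  simpa only [hdet, RCLike.ofReal_re] using hpsd.det_rpow_le_trace_div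

end Square

variable {m n K R : Type*} [DecidableEq m]

theorem conjTranspose_submatrix_mul_diagonal_conj [Fintype K] [DecidableEq K] [CommRing R]
    [StarRing R] {V : Matrix K K R} (hV : Vᴴ * V = 1) (d : K → R) {e : m → K}
    (he : Function.Injective e) :
    (V.submatrix id e)ᴴ * (V * diagonal d * Vᴴ) * V.submatrix id e = diagonal (d ∘ e) := by
  have hVe : (V.submatrix id e)ᴴ * V = (1 : Matrix K K R).submatrix e id := by
    rw [conjTranspose_submatrix, ← hV]; ext; simp [mul_apply]
  have hVe' : Vᴴ * V.submatrix id e = (1 : Matrix K K R).submatrix id e := by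
    rw [← hV]; ext; simp [mul_apply]
  calc (V.submatrix id e)ᴴ * (V * diagonal d * Vᴴ) * V.submatrix id e
      = ((V.submatrix id e)ᴴ * V) * diagonal d * (Vᴴ * V.submatrix id e) := by
        simp only [Matrix.mul_assoc]
    _ = (diagonal d).submatrix e e := by
        rw [hVe, hVe']
        ext i j
        by_cases h : i = j <;> simp [mul_apply, one_apply, diagonal_apply, h, he.ne]
    _ = diagonal (d ∘ e) := submatrix_diagonal d e he

theorem inv_one_add_conjTranspose_submatrix_mul_mul [Fintype K] [DecidableEq K] [Fintype m]
    [Fintype n] [DecidableEq n] [CommRing R] [StarRing R] {V : Matrix K K R} (hV : Vᴴ * V = 1)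
    (d : K → R) {e : m → K} (he : Function.Injective e) (P : Matrix m n R) {Ψ : Matrix n n R}
    (hΨ : Ψᴴ * Ψ = 1) :
    (1 + (V.submatrix id e * P * Ψ)ᴴ * (V * diagonal d * Vᴴ) * (V.submatrix id e * P * Ψ))⁻¹ =
      Ψᴴ * (1 + Pᴴ * diagonal (d ∘ e) * P)⁻¹ * Ψ := by
  rw [← inv_one_add_mul_mul_of_mul_eq_one hΨ, ← conjTranspose_submatrix_mul_diagonal_conj hV d he]
  simp only [conjTranspose_mul, Matrix.mul_assoc]

theorem diagonal_mul_one_submatrix_mul_transpose [Fintype m] [Fintype n] [DecidableEq n]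
    [CommSemiring R] {e : m → n} (he : Function.Injective e) (φ : m → R) :
    diagonal φ * (1 : Matrix n n R).submatrix e id *
      (diagonal φ * (1 : Matrix n n R).submatrix e id)ᵀ = diagonal (φ ^ 2) := by
  ext i j; by_cases h : i = j <;> simp [mul_apply, diagonal_apply, one_apply, he.eq_iff, h, sq]

theorem conjTranspose_diagonal_mul_one_submatrix [Fintype m] [DecidableEq n] [CommSemiring R]
    [StarRing R] (e : m → n) {φ : m → R} (hφ : IsSelfAdjoint φ) :
    (diagonal φ * (1 : Matrix n n R).submatrix e id)ᴴ =
      (diagonal φ * (1 : Matrix n n R).submatrix e id)ᵀ := by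
  simp [conjTranspose_mul, transpose_mul, conjTranspose_submatrix, transpose_submatrix,
    hφ.star_eq]

theorem det_one_add_transpose_mul_diagonal_mul [Fintype m] [Fintype n] [DecidableEq n]
    [CommRing R] {P : Matrix m n R} {w : m → R} (hP : P * Pᵀ = diagonal w) (d : m → R) :
    (1 + Pᵀ * diagonal d * P).det = ∏ i, (1 + d i * w i) := by
  rw [Matrix.mul_assoc, det_one_add_mul_comm, Matrix.mul_assoc, hP, diagonal_mul_diagonal,
    ← diagonal_one, diagonal_add, det_diagonal]

theorem of_dite_eq_diagonal_mul_one_submatrix {q M : ℕ} (hqM : q ≤ M) [Semiring R]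
    (φ : Fin q → R) :
    (of fun (i : Fin q) (j : Fin M) => if (j : ℕ) < q then if (i : ℕ) = j then φ i else 0 else 0)
      = diagonal φ * (1 : Matrix (Fin M) (Fin M) R).submatrix (Fin.castLE hqM) id := by
  ext i j
  simp [diagonal_mul, one_apply, Fin.ext_iff]
  omega

end Matrix

theorem inv_prod_mul_div_rpow {q : ℕ} {μ : ℕ → ℝ} (hμ : ∀ j ∈ range q, 0 ≤ μ j) {S : ℝ}
    (hS : 0 ≤ S) (M : ℝ) : ((∏ j ∈ range q, μ j * S / q)⁻¹) ^ (1 / M) =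
      (q : ℝ) ^ ((q : ℝ) / M) * S ^ (-(q : ℝ) / M) * ∏ j ∈ range q, μ j ^ (-1 / M) := by
  have hP : 0 ≤ ∏ j ∈ range q, μ j := prod_nonneg hμ
  have hq : (0 : ℝ) ≤ q := q.cast_nonneg
  simp_rw [mul_div_assoc]
  rw [prod_mul_distrib, prod_const, card_range, mul_inv, Real.mul_rpow (inv_nonneg.2 hP)
    (by positivity), Real.inv_rpow hP, ← Real.rpow_neg hP, ← Real.finsetProd_rpow _ _ hμ,
    Real.inv_rpow (by positivity), ← Real.rpow_natCast, ← Real.rpow_mul (by positivity),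
    ← Real.rpow_neg (by positivity), Real.div_rpow hS hq, Real.rpow_neg hq, div_inv_eq_mul,
    mul_one_div, neg_div, neg_div]
  ring

theorem stmt14_general (P K M q : ℕ) (hM : 0 < M) (hqM : q ≤ M) (hqK : q ≤ K)
    (p0 : ℝ) (hp0 : 0 < p0)
    (H : Matrix (Fin P) (Fin K) ℂ)
    (Rvv : Matrix (Fin P) (Fin P) ℂ)
    (V : Matrix (Fin K) (Fin K) ℂ) (hV : Vᴴ * V = 1)
    (μ : ℕ → ℝ) (hpos : ∀ i < K, 0 < μ i)
    (hA : Hᴴ * Rvv⁻¹ * H =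
      V * Matrix.diagonal (fun i : Fin K => (μ (i : ℕ) : ℂ)) * Vᴴ)
    (φ : Fin q → ℝ)
    (hφ : ∀ i : Fin q, φ i ^ 2 =
      (p0 + ∑ j ∈ Finset.range q, (μ j)⁻¹) / q - (μ (i : ℕ))⁻¹)
    (Ψ : Matrix (Fin M) (Fin M) ℂ) (hΨ : Ψᴴ * Ψ = 1)
    (Pad : Matrix (Fin q) (Fin M) ℂ)
    (hPad : ∀ (i : Fin q) (j : Fin M),
      Pad i j = if h : (j : ℕ) < q then (if (i : ℕ) = (j : ℕ) then (φ i : ℂ) else 0) else 0)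
    (F : Matrix (Fin K) (Fin M) ℂ)
    (hF : F = V.submatrix id (Fin.castLE hqK) * Pad * Ψ)
    (B : Matrix (Fin M) (Fin M) ℂ)
    (hB : ∀ i j : Fin M, j ≤ i → B i j = 0) :
    (B + 1) * (1 + Fᴴ * Hᴴ * Rvv⁻¹ * H * F)⁻¹ * (B + 1)ᴴ =
      (B + 1) * Ψᴴ *
        (1 + Padᵀ * Matrix.diagonal (fun i : Fin q => (μ (i : ℕ) : ℂ)) * Pad)⁻¹ *
        Ψ * (B + 1)ᴴ ∧
    ((B + 1) * (1 + Fᴴ * Hᴴ * Rvv⁻¹ * H * F)⁻¹ * (B + 1)ᴴ).trace.re / M ≥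
      (q : ℝ) ^ ((q : ℝ) / M) *
        (p0 + ∑ j ∈ Finset.range q, (μ j)⁻¹) ^ (-(q : ℝ) / M) *
        ∏ j ∈ Finset.range q, (μ j) ^ (-(1:ℝ) / M) := by
  set S := p0 + ∑ j ∈ range q, (μ j)⁻¹
  have hμ : ∀ j < q, 0 < μ j := fun j hj => hpos j (hj.trans_le hqK)
  have hPad_eq : Pad = diagonal (fun i => (φ i : ℂ)) *
      (1 : Matrix (Fin M) (Fin M) ℂ).submatrix (Fin.castLE hqM) id :=
    (Matrix.ext hPad).trans (of_dite_eq_diagonal_mul_one_submatrix hqM _)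
  have hPadH : Padᴴ = Padᵀ := by
    rw [hPad_eq, conjTranspose_diagonal_mul_one_submatrix _
      (funext fun i => Complex.conj_ofReal (φ i))]
  have hRee : (B + 1) * (1 + Fᴴ * Hᴴ * Rvv⁻¹ * H * F)⁻¹ * (B + 1)ᴴ =
      (B + 1) * Ψᴴ * (1 + Padᵀ * diagonal (fun i : Fin q => (μ i : ℂ)) * Pad)⁻¹ * Ψ *
        (B + 1)ᴴ := by
    rw [Matrix.mul_assoc Fᴴ, Matrix.mul_assoc Fᴴ, hA, hF,
      inv_one_add_conjTranspose_submatrix_mul_mul hV _ (Fin.castLE_injective hqK) _ hΨ, hPadH]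
    simp only [Matrix.mul_assoc]
    rfl
  refine ⟨hRee, ?_⟩
  have hS : 0 ≤ S :=
    add_nonneg hp0.le (sum_nonneg fun j hj => (inv_pos.2 (hμ j (mem_range.1 hj))).le)
  have hD : (1 + Padᵀ * diagonal (fun i : Fin q => (μ i : ℂ)) * Pad).PosSemidef :=
    PosSemidef.one.add <| hPadH ▸ PosSemidef.conjTranspose_mul_mul_same
      (posSemidef_diagonal_iff.2 fun i => by exact_mod_cast (hμ i i.2).le) Pad
  have hDdet : (1 + Padᵀ * diagonal (fun i : Fin q => (μ i : ℂ)) * Pad).det =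
      ((∏ j ∈ range q, μ j * S / q : ℝ) : ℂ) := by
    rw [det_one_add_transpose_mul_diagonal_mul (hPad_eq ▸
      diagonal_mul_one_submatrix_mul_transpose (Fin.castLE_injective hqM) _),
      ← Fin.prod_univ_eq_prod_range, Complex.ofReal_prod]
    refine prod_congr rfl fun i _ => ?_
    have hμi := (hμ i i.2).ne'
    rw [show μ i * S / q = 1 + μ i * φ i ^ 2 by rw [hφ i]; field_simp; ring]
    push_cast
    rfl
  have : Nonempty (Fin M) := ⟨⟨0, hM⟩⟩
  rw [hRee, ge_iff_le, ← inv_prod_mul_div_rpow (fun j hj => (hμ j (mem_range.1 hj)).le) hS]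
  have h := hD.inv_rpow_le_trace_conj_inv_div (det_add_one_of_forall_le_eq_zero hB) hΨ hDdet
  rwa [Fintype.card_fin, RCLike.re_to_complex] at h

/-- With the waterfilling precoder `F = Ṽ_q [Φ 0] Ψ`, the MMSE error covariance
satisfies `R_ee = U Ψᴴ (I + Φ̆ᵀ Λ̃_q Φ̆)⁻¹ Ψ Uᴴ` (`U = B + I`), and the arithmetic
MSE `tr(R_ee)/M` is bounded below by
`q^(q/M) (p0 + Σ_{j=1}^q λ_j⁻¹)^(−q/M) ∏_{j=1}^q λ_j^(−1/M)`. -/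
theorem stmt14 (P K M q : ℕ) (hM : 0 < M) (hq : 0 < q) (hqM : q ≤ M) (hqK : q ≤ K)
    (p0 : ℝ) (hp0 : 0 < p0)
    (H : Matrix (Fin P) (Fin K) ℂ)
    (Rvv : Matrix (Fin P) (Fin P) ℂ) (hRvv : Rvv.PosDef)
    (V : Matrix (Fin K) (Fin K) ℂ) (hV : Vᴴ * V = 1)
    (μ : ℕ → ℝ) (hpos : ∀ i < K, 0 < μ i)
    (hmono : ∀ i j : ℕ, i ≤ j → j < K → μ j ≤ μ i)
    (hA : Hᴴ * Rvv⁻¹ * H =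
      V * Matrix.diagonal (fun i : Fin K => (μ (i : ℕ) : ℂ)) * Vᴴ)
    (φ : Fin q → ℝ) (hφnn : ∀ i, 0 ≤ φ i)
    (hφ : ∀ i : Fin q, φ i ^ 2 =
      (p0 + ∑ j ∈ Finset.range q, (μ j)⁻¹) / q - (μ (i : ℕ))⁻¹)
    (Ψ : Matrix (Fin M) (Fin M) ℂ) (hΨ : Ψᴴ * Ψ = 1)
    (Pad : Matrix (Fin q) (Fin M) ℂ)
    (hPad : ∀ (i : Fin q) (j : Fin M),
      Pad i j = if h : (j : ℕ) < q then (if (i : ℕ) = (j : ℕ) then (φ i : ℂ) else 0) else 0)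
    (F : Matrix (Fin K) (Fin M) ℂ)
    (hF : F = V.submatrix id (Fin.castLE hqK) * Pad * Ψ)
    (B : Matrix (Fin M) (Fin M) ℂ)
    (hB : ∀ i j : Fin M, j ≤ i → B i j = 0) :
    (B + 1) * (1 + Fᴴ * Hᴴ * Rvv⁻¹ * H * F)⁻¹ * (B + 1)ᴴ =
      (B + 1) * Ψᴴ *
        (1 + Padᵀ * Matrix.diagonal (fun i : Fin q => (μ (i : ℕ) : ℂ)) * Pad)⁻¹ *
        Ψ * (B + 1)ᴴ ∧
    ((B + 1) * (1 + Fᴴ * Hᴴ * Rvv⁻¹ * H * F)⁻¹ * (B + 1)ᴴ).trace.re / M ≥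
      (q : ℝ) ^ ((q : ℝ) / M) *
        (p0 + ∑ j ∈ Finset.range q, (μ j)⁻¹) ^ (-(q : ℝ) / M) *
        ∏ j ∈ Finset.range q, (μ j) ^ (-(1:ℝ) / M) :=
  stmt14_general P K M q hM hqM hqK p0 hp0 H Rvv V hV μ hpos hA φ hφ Ψ hΨ Pad hPad F hF B hB
end

section
/- Let f(x) = α·erfc(√(β/x)) + ζ·erfc(3√(β/x)) with α, β > 0 and ζ ≥ 0. Then f is convex on the interval (0, 2β/3). Consequently, for positive reals x1,…,xM in (0, 2β/3), (1/M) Σ_i f(x_i) ≥ f((1/M) Σ_i x_i), with equality when all x_i are equal. -/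
/-!
Write `φ_a(x) = ∫_{√(a/x)}^∞ e^{-z²} dz`, so that `erfc (c √(β/x)) = (2/√π) φ_{c²β}(x)`.
The chain rule gives `φ_a'(x) = (√a/2) e^{-a/x} x^{-3/2}` and
`φ_a''(x) = (√a/2) e^{-a/x} x^{-5/2} (a/x - 3/2)`, which is nonnegative for `x ≤ 2a/3`.
Hence `f = (2/√π) (α φ_β + ζ φ_{9β})` is convex on `(0, 2β/3)`, and the average bound is
Jensen's inequality with uniform weights.
-/

open MeasureTheory Set Real

theorem hasDerivAt_integral_Ioi {E : Type*} [NormedAddCommGroup E] [NormedSpace ℝ E]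
    [CompleteSpace E] {f : ℝ → E} (hfi : Integrable f) {t : ℝ} (hft : ContinuousAt f t) :
    HasDerivAt (fun u => ∫ z in Ioi u, f z) (-f t) t := by
  have hsplit : (fun u => ∫ z in Ioi u, f z) = fun u => (∫ z in Ioi 0, f z) - ∫ z in 0..u, f z :=
    funext fun u => eq_sub_of_add_eq' <|
      intervalIntegral.integral_interval_add_Ioi hfi.integrableOn hfi.integrableOn
  rw [hsplit]
  exact (intervalIntegral.integral_hasDerivAt_right hfi.intervalIntegrable
    hfi.aestronglyMeasurable.stronglyMeasurableAtFilter hft).const_sub _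

noncomputable def gaussTail (t : ℝ) : ℝ := ∫ z in Ioi t, exp (-z ^ 2)

theorem hasDerivAt_gaussTail (t : ℝ) : HasDerivAt gaussTail (-exp (-t ^ 2)) t :=
  hasDerivAt_integral_Ioi (by simpa using integrable_exp_neg_mul_sq one_pos)
    (by fun_prop)

theorem hasDerivAt_gaussTail_sqrt_div {a x : ℝ} (ha : 0 ≤ a) (hx : 0 < x) :
    HasDerivAt (fun s => gaussTail √(a / s)) (√a / 2 * (exp (-a / x) / (x * √x))) x := by
  have hsqrt : HasDerivAt (fun s => √a / √s) (-(√a / (2 * (x * √x)))) x := by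
    refine ((hasDerivAt_const x √a).div (hasDerivAt_sqrt hx.ne')
      (sqrt_pos.mpr hx).ne').congr_deriv ?_
    field_simp
    rw [sq_sqrt hx.le]
    ring
  simp_rw [sqrt_div ha]
  refine ((hasDerivAt_gaussTail _).comp x hsqrt).congr_deriv ?_
  rw [div_pow, sq_sqrt ha, sq_sqrt hx.le, neg_div]
  ring

theorem hasDerivAt_exp_neg_div_div_mul_sqrt {a x : ℝ} (hx : 0 < x) :
    HasDerivAt (fun s => exp (-a / s) / (s * √s))
      (exp (-a / x) * (a / x - 3 / 2) / (x ^ 2 * √x)) x := by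
  have hexp : HasDerivAt (fun s => exp (-a / s)) (exp (-a / x) * (a / x ^ 2)) x :=
    ((hasDerivAt_const x (-a)).div (hasDerivAt_id x) hx.ne').exp.congr_deriv (by simp)
  have hden : HasDerivAt (fun s => s * √s) (1 * √x + x * (1 / (2 * √x))) x :=
    (hasDerivAt_id' x).mul (hasDerivAt_sqrt hx.ne')
  refine (hexp.div hden (by positivity)).congr_deriv ?_
  field_simp
  rw [sq_sqrt hx.le]
  ring

theorem convexOn_gaussTail_sqrt_div {a : ℝ} (ha : 0 ≤ a) :
    ConvexOn ℝ (Ioc 0 (2 * a / 3)) fun x => gaussTail √(a / x) := by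
  refine convexOn_of_hasDerivWithinAt2_nonneg (convex_Ioc _ _)
    (f' := fun x => √a / 2 * (exp (-a / x) / (x * √x)))
    (f'' := fun x => √a / 2 * (exp (-a / x) * (a / x - 3 / 2) / (x ^ 2 * √x)))
    (fun x hx => (hasDerivAt_gaussTail_sqrt_div ha hx.1).continuousAt.continuousWithinAt)
    ?_ ?_ ?_ <;> rw [interior_Ioc] <;> rintro x ⟨hx, hxa⟩
  · exact (hasDerivAt_gaussTail_sqrt_div ha hx).hasDerivWithinAt
  · exact ((hasDerivAt_exp_neg_div_div_mul_sqrt hx).const_mul _).hasDerivWithinAt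
  · have : 0 ≤ a / x - 3 / 2 := by
      rw [sub_nonneg, le_div_iff₀ hx]
      linarith
    positivity

theorem ConvexOn.map_mean_le {E ι : Type*} [AddCommGroup E] [Module ℝ E] [Fintype ι]
    [Nonempty ι] {s : Set E} {f : E → ℝ} (hf : ConvexOn ℝ s f) {x : ι → E}
    (hx : ∀ i, x i ∈ s) :
    f ((Fintype.card ι : ℝ)⁻¹ • ∑ i, x i) ≤ (Fintype.card ι : ℝ)⁻¹ * ∑ i, f (x i) := by
  simpa [Finset.smul_sum, Finset.mul_sum] using
    hf.map_sum_le (t := Finset.univ) (w := fun _ => (Fintype.card ι : ℝ)⁻¹)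
      (fun _ _ => by positivity) (by simp) (fun i _ => hx i)

/-- The BER function `f(x) = α erfc(√(β/x)) + ζ erfc(3√(β/x))` is convex on
`(0, 2β/3)`, so by Jensen's inequality the average BER is bounded below by the
BER at the average MSE, with equality when all the `x_i` are equal. -/
theorem stmt15 (α β ζ : ℝ) (hα : 0 < α) (hβ : 0 < β) (hζ : 0 ≤ ζ)
    (M : ℕ) (hM : 0 < M) (x : Fin M → ℝ)
    (hx : ∀ i, x i ∈ Set.Ioo 0 (2 * β / 3))
    (erfc : ℝ → ℝ)
    (herfc : ∀ t, erfc t = (2 / Real.sqrt Real.pi) * ∫ z in Set.Ioi t, Real.exp (-z ^ 2))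
    (f : ℝ → ℝ)
    (hf : ∀ s, f s = α * erfc (Real.sqrt (β / s)) + ζ * erfc (3 * Real.sqrt (β / s))) :
    ConvexOn ℝ (Set.Ioo 0 (2 * β / 3)) f ∧
    (1 / M : ℝ) * ∑ i, f (x i) ≥ f ((1 / M : ℝ) * ∑ i, x i) ∧
    ((∀ i j, x i = x j) →
      (1 / M : ℝ) * ∑ i, f (x i) = f ((1 / M : ℝ) * ∑ i, x i)) := by
  have hf_eq : f = fun s => (α * (2 / √π)) • gaussTail √(β / s) +
      (ζ * (2 / √π)) • gaussTail √(3 ^ 2 * β / s) := by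
    funext s
    rw [hf, herfc, herfc, mul_div_assoc, sqrt_mul (by positivity), sqrt_sq zero_le_three]
    simp only [gaussTail, smul_eq_mul]
    ring
  have hconv : ConvexOn ℝ (Ioo 0 (2 * β / 3)) f := by
    rw [hf_eq]
    refine ConvexOn.add ?_ ?_ <;> refine ConvexOn.smul (by positivity) ?_
    · exact (convexOn_gaussTail_sqrt_div hβ.le).subset Ioo_subset_Ioc_self (convex_Ioo _ _)
    · exact (convexOn_gaussTail_sqrt_div (by positivity)).subset
        (Ioo_subset_Ioc_self.trans (Ioc_subset_Ioc_right (by linarith))) (convex_Ioo _ _)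
  have : Nonempty (Fin M) := ⟨⟨0, hM⟩⟩
  refine ⟨hconv, by simpa using hconv.map_mean_le hx, fun hconst => ?_⟩
  rw [show x = fun _ => x ⟨0, hM⟩ from funext fun i => hconst i _]
  simp [hM.ne']
end

section
/- Let λ1 ≥ … ≥ λ_M > 0 and p0 > 0, and assume M(p0 + Σ_i λ_i^{-1}) > (Σ_i λ_i^{-1/2})². Then e²_MMSE-L = (Σ_i λ_i^{-1/2})² / (M(p0 + Σ_i λ_i^{-1}) − (Σ_i λ_i^{-1/2})²) is strictly greater than e²_MMSE-BDFD = M(∏_i λ_i^{-1})^{1/M}/(p0 + Σ_i λ_i^{-1}). -/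
open Finset

/-- The optimized linear-MMSE MSE strictly exceeds the optimized MMSE-BDFD MSE:
`(Σ λ_i^{-1/2})²/(M(p0+Σ λ_i⁻¹) − (Σ λ_i^{-1/2})²) > M (∏ λ_i⁻¹)^{1/M}/(p0+Σ λ_i⁻¹)`. -/
theorem stmt17 (M : ℕ) (hM : 0 < M) (p0 : ℝ) (hp0 : 0 < p0)
    (lam : Fin M → ℝ) (hpos : ∀ i, 0 < lam i)
    (hmono : ∀ i j : Fin M, i ≤ j → lam j ≤ lam i)
    (hfeas : (M : ℝ) * (p0 + ∑ i, (lam i)⁻¹) > (∑ i, (lam i) ^ (-(1:ℝ)/2)) ^ 2) :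
    (∑ i, (lam i) ^ (-(1:ℝ)/2)) ^ 2 /
        ((M : ℝ) * (p0 + ∑ i, (lam i)⁻¹) - (∑ i, (lam i) ^ (-(1:ℝ)/2)) ^ 2) >
      (M : ℝ) * (∏ i, (lam i)⁻¹) ^ ((1:ℝ)/M) / (p0 + ∑ i, (lam i)⁻¹) := by
  have hMpos : (0:ℝ) < M := Nat.cast_pos.mpr hM
  set S := ∑ i, (lam i) ^ (-(1:ℝ)/2) with hSdef
  set T := p0 + ∑ i, (lam i)⁻¹ with hTdef
  set P := ∏ i, (lam i)⁻¹ with hPdef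
  set G := P ^ ((1:ℝ)/M) with hGdef
  have hPpos : 0 < P := prod_pos fun i _ => inv_pos.mpr (hpos i)
  have hGpos : 0 < G := Real.rpow_pos_of_pos hPpos _
  have hSpos : 0 < S :=
    sum_pos (fun i _ => Real.rpow_pos_of_pos (hpos i) _)
      (univ_nonempty_iff.mpr ⟨⟨0, hM⟩⟩)
  have hTpos : 0 < T := by
    have h0 : 0 ≤ ∑ i, (lam i)⁻¹ := sum_nonneg fun i _ => (inv_pos.mpr (hpos i)).le
    rw [hTdef]; linarith
  -- AM-GM: G^(1/2) ≤ S / M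
  have hamgm : (M:ℝ) * G ^ ((1:ℝ)/2) ≤ S := by
    have h := Real.geom_mean_le_arith_mean_weighted univ (fun _ : Fin M => (1:ℝ)/M)
      (fun i => (lam i) ^ (-(1:ℝ)/2))
      (fun i _ => by positivity) (by simp; field_simp)
      (fun i _ => (Real.rpow_pos_of_pos (hpos i) _).le)
    have hprod : ∏ i : Fin M, ((lam i) ^ (-(1:ℝ)/2)) ^ ((1:ℝ)/M) = G ^ ((1:ℝ)/2) := by
      rw [Real.finset_prod_rpow _ _ (fun i _ => (Real.rpow_pos_of_pos (hpos i) _).le)]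
      have hQpos : 0 < ∏ i, lam i := prod_pos fun i _ => hpos i
      have h1 : ∏ i : Fin M, (lam i) ^ (-(1:ℝ)/2) = P ^ ((1:ℝ)/2) := by
        rw [Real.finset_prod_rpow _ _ (fun i _ => (hpos i).le) (-(1:ℝ)/2), hPdef,
          Finset.prod_inv_distrib, Real.inv_rpow hQpos.le, ← Real.rpow_neg hQpos.le]
        norm_num
      rw [h1, ← Real.rpow_mul hPpos.le, hGdef, ← Real.rpow_mul hPpos.le, mul_comm]
    rw [hprod] at h
    have hsum : ∑ i : Fin M, (1:ℝ)/M * (lam i) ^ (-(1:ℝ)/2) = S / M := by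
      rw [hSdef, sum_div]
      exact Finset.sum_congr rfl fun i _ => by ring
    rw [hsum] at h
    calc (M:ℝ) * G ^ ((1:ℝ)/2) ≤ (M:ℝ) * (S / M) := by
          exact mul_le_mul_of_nonneg_left h hMpos.le
      _ = S := by field_simp
  have hS2 : (M:ℝ)^2 * G ≤ S^2 := by
    have h2 := mul_le_mul hamgm hamgm (by positivity) hSpos.le
    have : ((M:ℝ) * G ^ ((1:ℝ)/2)) * ((M:ℝ) * G ^ ((1:ℝ)/2)) = (M:ℝ)^2 * G := by
      have : G ^ ((1:ℝ)/2) * G ^ ((1:ℝ)/2) = G := by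
        rw [← Real.rpow_add hGpos]; norm_num
      nlinarith [this]
    nlinarith [h2]
  have hden : 0 < (M:ℝ) * T - S^2 := by linarith [hfeas]
  have hden2 : 0 < (M:ℝ) * T - (M:ℝ)^2 * G := by linarith
  have step1 : ((M:ℝ)^2 * G) / ((M:ℝ) * T - (M:ℝ)^2 * G) ≤ S^2 / ((M:ℝ) * T - S^2) := by
    rw [div_le_div_iff₀ hden2 hden]; nlinarith
  have step2 : (M:ℝ) * G / T < ((M:ℝ)^2 * G) / ((M:ℝ) * T - (M:ℝ)^2 * G) := by
    rw [div_lt_div_iff₀ hTpos hden2]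
    nlinarith [mul_pos (mul_pos (mul_pos hMpos hMpos) hMpos) (mul_pos hGpos hGpos)]
  linarith
end
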